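/- Under assumptions (A1)–(A4) with μ > 2, the operator Ψ(f1,f2) = (V1(f1,f2), V2(f1,f2)) maps 𝒦 into 𝒦; in particular, for every (f1,f2) ∈ 𝒦, V1(f1,f2) is continuous on [s0,r0], V2(f1,f2) is bounded and continuous on [r0,∞), V2(f1,f2)(r0) = 0, and V2(f1,f2)(η) → −1 as η → ∞. Moreover, if Ψ is a contraction on 𝒦 (i.e. there exists ε < 1 with ‖Ψ(f1,f2) − Ψ(g1,g2)‖ ≤ ε·‖(f1,f2) − (g1,g2)‖ for all (f1,f2), (g1,g2) ∈ 𝒦), then Ψ has a unique fixed point (f1*, f2*) ∈ 𝒦. -/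

import Mathlib

open MeasureTheory Filter Topology

noncomputable section

/-- The bundle of fixed constants of the problem. -/
structure Cst where
  nu : ℝ
  mu : ℝ
  a : ℝ
  D1 : ℝ
  D2 : ℝ
  Q : ℝ
  D1s : ℝ
  D2s : ℝ
  L1m : ℝ
  L1M : ℝ
  N1m : ℝ
  N1M : ℝ
  K1m : ℝ
  K1M : ℝ
  L2m : ℝ
  L2M : ℝ
  N2m : ℝ
  N2M : ℝ
  K2m : ℝ
  K2M : ℝ
  Lt1 : ℝ
  Nt1 : ℝ
  Kt1 : ℝ
  Lt2 : ℝ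
  Nt2 : ℝ
  Kt2 : ℝ

/-- The space `C[s0,r0]`, modeled as real functions continuous on `[s0,r0]`. -/
def C1 (s0 r0 : ℝ) : Set (ℝ → ℝ) := {f | ContinuousOn f (Set.Icc s0 r0)}

/-- The set `ℳ ⊆ C_b[r0,∞)`: bounded continuous functions on `[r0,∞)` with
`f(r0) = 0` and `f(η) → -1` as `η → ∞`. -/
def Mset (r0 : ℝ) : Set (ℝ → ℝ) :=
  {f | ContinuousOn f (Set.Ici r0) ∧ (∃ C, ∀ x ∈ Set.Ici r0, |f x| ≤ C) ∧
    f r0 = 0 ∧ Tendsto f atTop (𝓝 (-1))}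

/-- Sup norm of `f` over the set `S`. -/
def supOn (S : Set ℝ) (f : ℝ → ℝ) : ℝ := ⨆ x : S, |f x.1|

/-- Norm of the difference of two pairs in `𝒦 = C[s0,r0] × ℳ`. -/
def pairNorm (s0 r0 : ℝ) (f1 f2 g1 g2 : ℝ → ℝ) : ℝ :=
  max (supOn (Set.Icc s0 r0) (f1 - g1)) (supOn (Set.Ici r0) (f2 - g2))

/-- Positivity assumptions on all the fixed constants and on `s0, r0`. -/
def PosC (c : Cst) (s0 r0 : ℝ) : Prop :=
  0 < c.a ∧ 0 < c.nu ∧ c.nu < 1 ∧ 2 < c.mu ∧ 0 < s0 ∧ s0 < r0 ∧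
  0 < c.D1 ∧ 0 < c.D2 ∧ 0 < c.Q ∧ 0 < c.D1s ∧ 0 < c.D2s ∧
  0 < c.L1m ∧ 0 < c.L1M ∧ 0 < c.N1m ∧ 0 < c.N1M ∧ 0 < c.K1m ∧ 0 < c.K1M ∧
  0 < c.L2m ∧ 0 < c.L2M ∧ 0 < c.N2m ∧ 0 < c.N2M ∧ 0 < c.K2m ∧ 0 < c.K2M ∧
  0 < c.Lt1 ∧ 0 < c.Nt1 ∧ 0 < c.Kt1 ∧ 0 < c.Lt2 ∧ 0 < c.Nt2 ∧ 0 < c.Kt2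

/-- Positivity assumptions on all the fixed constants (no `s0, r0`). -/
def PosCst (c : Cst) : Prop :=
  0 < c.a ∧ 0 < c.nu ∧ c.nu < 1 ∧ 2 < c.mu ∧
  0 < c.D1 ∧ 0 < c.D2 ∧ 0 < c.Q ∧ 0 < c.D1s ∧ 0 < c.D2s ∧
  0 < c.L1m ∧ 0 < c.L1M ∧ 0 < c.N1m ∧ 0 < c.N1M ∧ 0 < c.K1m ∧ 0 < c.K1M ∧
  0 < c.L2m ∧ 0 < c.L2M ∧ 0 < c.N2m ∧ 0 < c.N2M ∧ 0 < c.K2m ∧ 0 < c.K2M ∧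
  0 < c.Lt1 ∧ 0 < c.Nt1 ∧ 0 < c.Kt1 ∧ 0 < c.Lt2 ∧ 0 < c.Nt2 ∧ 0 < c.Kt2

/-- Assumptions (A1)–(A4): continuity of the images of `L, N, K`, the two-sided
bounds and the Lipschitz bounds. -/
def Assum (c : Cst) (s0 r0 : ℝ) (L1 N1 K1 L2 N2 K2 : (ℝ → ℝ) → ℝ → ℝ) : Prop :=
  (∀ f1 ∈ C1 s0 r0,
    ContinuousOn (L1 f1) (Set.Icc s0 r0) ∧ ContinuousOn (N1 f1) (Set.Icc s0 r0) ∧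
      ContinuousOn (K1 f1) (Set.Icc s0 r0)) ∧
  (∀ f2 ∈ Mset r0,
    ContinuousOn (L2 f2) (Set.Ici r0) ∧ ContinuousOn (N2 f2) (Set.Ici r0) ∧
      ContinuousOn (K2 f2) (Set.Ici r0)) ∧
  (∀ f1 ∈ C1 s0 r0, ∀ η ∈ Set.Icc s0 r0,
    c.L1m * η ^ c.mu ≤ L1 f1 η ∧ L1 f1 η ≤ c.L1M * η ^ c.mu ∧
    c.N1m * η ^ (-c.mu) ≤ N1 f1 η ∧ N1 f1 η ≤ c.N1M * η ^ (-c.mu) ∧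
    c.K1m * η ^ (-c.mu) ≤ K1 f1 η ∧ K1 f1 η ≤ c.K1M * η ^ (-c.mu)) ∧
  (∀ f2 ∈ Mset r0, ∀ η ∈ Set.Ici r0,
    c.L2m * η ^ c.mu ≤ L2 f2 η ∧ L2 f2 η ≤ c.L2M * η ^ c.mu ∧
    c.N2m * η ^ (-c.mu) ≤ N2 f2 η ∧ N2 f2 η ≤ c.N2M * η ^ (-c.mu) ∧
    c.K2m * η ^ (-c.mu) ≤ K2 f2 η ∧ K2 f2 η ≤ c.K2M * η ^ (-c.mu)) ∧
  (∀ f1 ∈ C1 s0 r0, ∀ g1 ∈ C1 s0 r0, ∀ η ∈ Set.Icc s0 r0,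
    |L1 f1 η - L1 g1 η| ≤ c.Lt1 * supOn (Set.Icc s0 r0) (f1 - g1) ∧
    |N1 f1 η - N1 g1 η| ≤ c.Nt1 * supOn (Set.Icc s0 r0) (f1 - g1) ∧
    |K1 f1 η - K1 g1 η| ≤ c.Kt1 * η ^ (-c.mu) * supOn (Set.Icc s0 r0) (f1 - g1)) ∧
  (∀ f2 ∈ Mset r0, ∀ g2 ∈ Mset r0, ∀ η ∈ Set.Ici r0,
    |L2 f2 η - L2 g2 η| ≤ c.Lt2 * supOn (Set.Ici r0) (f2 - g2) ∧
    |N2 f2 η - N2 g2 η| ≤ c.Nt2 * supOn (Set.Ici r0) (f2 - g2) ∧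
    |K2 f2 η - K2 g2 η| ≤ c.Kt2 * η ^ (-c.mu) * supOn (Set.Ici r0) (f2 - g2))

/-- `H(f1,f2) = ∫_{s0}^{r0} K(f1)(v)/v^ν dv + ∫_{r0}^{∞} K(f2)(v)/v^ν dv`. -/
def Hf (c : Cst) (s0 r0 : ℝ) (L1 N1 K1 L2 N2 K2 : (ℝ → ℝ) → ℝ → ℝ) (f1 f2 : ℝ → ℝ) : ℝ :=
  (∫ v in s0..r0, K1 f1 v / v ^ c.nu) + ∫ v in Set.Ioi r0, K2 f2 v / v ^ c.nu

/-- `E1(η; f1,f2)`. -/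
def E1f (c : Cst) (s0 r0 : ℝ) (L1 N1 K1 L2 N2 K2 : (ℝ → ℝ) → ℝ → ℝ) (f1 f2 : ℝ → ℝ)
    (η : ℝ) : ℝ :=
  Real.exp (-(∫ v in s0..η,
    (2 * c.a * v * (N1 f1 v / L1 f1 v)
      + c.D1 / Hf c s0 r0 L1 N1 K1 L2 N2 K2 f1 f2 * (K1 f1 v / (L1 f1 v * v ^ c.nu)))))

/-- `Φ1(η; f1,f2)`. -/
def Phi1f (c : Cst) (s0 r0 : ℝ) (L1 N1 K1 L2 N2 K2 : (ℝ → ℝ) → ℝ → ℝ) (f1 f2 : ℝ → ℝ)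
    (η : ℝ) : ℝ :=
  ∫ v in s0..η, E1f c s0 r0 L1 N1 K1 L2 N2 K2 f1 f2 v / (L1 f1 v * v ^ c.nu)

/-- `H1(η; f1,f2)`. -/
def H1f (c : Cst) (s0 r0 : ℝ) (L1 N1 K1 L2 N2 K2 : (ℝ → ℝ) → ℝ → ℝ) (f1 f2 : ℝ → ℝ)
    (η : ℝ) : ℝ :=
  ∫ v in s0..η, K1 f1 v / (v ^ c.nu * E1f c s0 r0 L1 N1 K1 L2 N2 K2 f1 f2 v)

/-- `G1(η; f1,f2)`. -/
def G1f (c : Cst) (s0 r0 : ℝ) (L1 N1 K1 L2 N2 K2 : (ℝ → ℝ) → ℝ → ℝ) (f1 f2 : ℝ → ℝ)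
    (η : ℝ) : ℝ :=
  ∫ v in s0..η, E1f c s0 r0 L1 N1 K1 L2 N2 K2 f1 f2 v
    * H1f c s0 r0 L1 N1 K1 L2 N2 K2 f1 f2 v / (L1 f1 v * v ^ c.nu)

/-- `V1(f1,f2)(η)`. -/
def V1f (c : Cst) (s0 r0 : ℝ) (L1 N1 K1 L2 N2 K2 : (ℝ → ℝ) → ℝ → ℝ) (f1 f2 : ℝ → ℝ)
    (η : ℝ) : ℝ :=
  s0 ^ c.nu * c.Q * Real.exp (-s0 ^ 2)
      * (Phi1f c s0 r0 L1 N1 K1 L2 N2 K2 f1 f2 r0 - Phi1f c s0 r0 L1 N1 K1 L2 N2 K2 f1 f2 η)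
    + c.D1s / Hf c s0 r0 L1 N1 K1 L2 N2 K2 f1 f2 ^ 2
      * (G1f c s0 r0 L1 N1 K1 L2 N2 K2 f1 f2 r0 - G1f c s0 r0 L1 N1 K1 L2 N2 K2 f1 f2 η)

/-- `E2(η; f1,f2)`. -/
def E2f (c : Cst) (s0 r0 : ℝ) (L1 N1 K1 L2 N2 K2 : (ℝ → ℝ) → ℝ → ℝ) (f1 f2 : ℝ → ℝ)
    (η : ℝ) : ℝ :=
  Real.exp (-(∫ v in r0..η,
    (2 * c.a * v * (N2 f2 v / L2 f2 v)
      + c.D2 / Hf c s0 r0 L1 N1 K1 L2 N2 K2 f1 f2 * (K2 f2 v / (L2 f2 v * v ^ c.nu)))))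

/-- `Φ2(η; f1,f2)`. -/
def Phi2f (c : Cst) (s0 r0 : ℝ) (L1 N1 K1 L2 N2 K2 : (ℝ → ℝ) → ℝ → ℝ) (f1 f2 : ℝ → ℝ)
    (η : ℝ) : ℝ :=
  ∫ v in r0..η, E2f c s0 r0 L1 N1 K1 L2 N2 K2 f1 f2 v / (L2 f2 v * v ^ c.nu)

/-- `Φ2(∞; f1,f2)`. -/
def Phi2I (c : Cst) (s0 r0 : ℝ) (L1 N1 K1 L2 N2 K2 : (ℝ → ℝ) → ℝ → ℝ) (f1 f2 : ℝ → ℝ) : ℝ :=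
  ∫ v in Set.Ioi r0, E2f c s0 r0 L1 N1 K1 L2 N2 K2 f1 f2 v / (L2 f2 v * v ^ c.nu)

/-- `H2(η; f1,f2)`. -/
def H2f (c : Cst) (s0 r0 : ℝ) (L1 N1 K1 L2 N2 K2 : (ℝ → ℝ) → ℝ → ℝ) (f1 f2 : ℝ → ℝ)
    (η : ℝ) : ℝ :=
  ∫ v in r0..η, K2 f2 v / (v ^ c.nu * E2f c s0 r0 L1 N1 K1 L2 N2 K2 f1 f2 v)

/-- `G2(η; f1,f2)`. -/
def G2f (c : Cst) (s0 r0 : ℝ) (L1 N1 K1 L2 N2 K2 : (ℝ → ℝ) → ℝ → ℝ) (f1 f2 : ℝ → ℝ)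
    (η : ℝ) : ℝ :=
  ∫ v in r0..η, E2f c s0 r0 L1 N1 K1 L2 N2 K2 f1 f2 v
    * H2f c s0 r0 L1 N1 K1 L2 N2 K2 f1 f2 v / (L2 f2 v * v ^ c.nu)

/-- `G2(∞; f1,f2) = lim_{η→∞} G2(η; f1,f2)`. -/
def G2I (c : Cst) (s0 r0 : ℝ) (L1 N1 K1 L2 N2 K2 : (ℝ → ℝ) → ℝ → ℝ) (f1 f2 : ℝ → ℝ) : ℝ :=
  limUnder atTop (G2f c s0 r0 L1 N1 K1 L2 N2 K2 f1 f2)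

/-- `V2(f1,f2)(η)`. -/
def V2f (c : Cst) (s0 r0 : ℝ) (L1 N1 K1 L2 N2 K2 : (ℝ → ℝ) → ℝ → ℝ) (f1 f2 : ℝ → ℝ)
    (η : ℝ) : ℝ :=
  (c.D2s / Hf c s0 r0 L1 N1 K1 L2 N2 K2 f1 f2 ^ 2 * G2I c s0 r0 L1 N1 K1 L2 N2 K2 f1 f2 - 1)
      * (Phi2f c s0 r0 L1 N1 K1 L2 N2 K2 f1 f2 η / Phi2I c s0 r0 L1 N1 K1 L2 N2 K2 f1 f2)
    - c.D2s / Hf c s0 r0 L1 N1 K1 L2 N2 K2 f1 f2 ^ 2 * G2f c s0 r0 L1 N1 K1 L2 N2 K2 f1 f2 η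

/-! Constants appearing in the estimates. -/

def Hinf (c : Cst) (s0 r0 : ℝ) : ℝ :=
  c.K1m / (c.mu + c.nu - 1) * (s0 ^ (-(c.mu + c.nu - 1)) - r0 ^ (-(c.mu + c.nu - 1)))

def Hsup (c : Cst) (s0 r0 : ℝ) : ℝ :=
  (c.K1M * s0 ^ (-(c.mu + c.nu - 1)) + c.K2M * r0 ^ (-(c.mu + c.nu - 1))) / (c.mu + c.nu - 1)

def Htil (c : Cst) (s0 r0 : ℝ) : ℝ :=
  (c.Kt1 * s0 ^ (-(c.mu + c.nu - 1)) + c.Kt2 * r0 ^ (-(c.mu + c.nu - 1))) / (c.mu + c.nu - 1)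

/-- Limit of `Hinf` as `r0 → ∞`. -/
def HinfI (c : Cst) (s0 : ℝ) : ℝ := c.K1m / (c.mu + c.nu - 1) * s0 ^ (-(c.mu + c.nu - 1))

/-- Limit of `Hsup` as `r0 → ∞`. -/
def HsupI (c : Cst) (s0 : ℝ) : ℝ := c.K1M * s0 ^ (-(c.mu + c.nu - 1)) / (c.mu + c.nu - 1)

/-- Limit of `Htil` as `r0 → ∞`. -/
def HtilI (c : Cst) (s0 : ℝ) : ℝ := c.Kt1 * s0 ^ (-(c.mu + c.nu - 1)) / (c.mu + c.nu - 1)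

/-- `E1inf` as a function of the value `h` of `Hinf`. -/
def E1infG (c : Cst) (s0 h : ℝ) : ℝ :=
  Real.exp (-(c.a * c.N1M / (c.L1m * (c.mu - 1) * s0 ^ (2 * c.mu - 2))
    + c.D1 * c.K1M / (h * c.L1m * (2 * c.mu + c.nu - 1) * s0 ^ (2 * c.mu + c.nu - 1))))

/-- `Ẽ1` as a function of the values `h` of `Hinf` and `ht` of `Htil`. -/
def E1tilG (c : Cst) (s0 h ht : ℝ) : ℝ :=
  2 * c.a * (c.Nt1 / (c.L1m * (c.mu - 2) * s0 ^ (c.mu - 2))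
      + c.N1M * c.Lt1 / (c.L1m ^ 2 * (3 * c.mu - 2) * s0 ^ (3 * c.mu - 2)))
    + c.D1 * (c.Kt1 / (h * c.L1m * (2 * c.mu + c.nu - 1) * s0 ^ (2 * c.mu + c.nu - 1))
      + c.K1M / (h * c.L1m)
        * (ht / (h * (2 * c.mu + c.nu - 1) * s0 ^ (2 * c.mu + c.nu - 1))
          + c.Lt1 / (c.L1m * (3 * c.mu + c.nu - 1) * s0 ^ (3 * c.mu + c.nu - 1))))

def Phi1tilG (c : Cst) (s0 h ht : ℝ) : ℝ :=
  E1tilG c s0 h ht / (c.L1m * (c.mu + c.nu - 1) * s0 ^ (c.mu + c.nu - 1))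
    + c.Lt1 / (c.L1m ^ 2 * (2 * c.mu + c.nu - 1) * s0 ^ (2 * c.mu + c.nu - 1))

def H1supG (c : Cst) (s0 h : ℝ) : ℝ :=
  c.K1M / (E1infG c s0 h * (c.mu + c.nu - 1) * s0 ^ (c.mu + c.nu - 1))

def H1tilG (c : Cst) (s0 h ht : ℝ) : ℝ :=
  (c.Kt1 + c.K1M * E1tilG c s0 h ht / E1infG c s0 h)
    / (E1infG c s0 h * (c.mu + c.nu - 1) * s0 ^ (c.mu + c.nu - 1))

def G1supG (c : Cst) (s0 h : ℝ) : ℝ :=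
  H1supG c s0 h / (c.L1m * (c.mu + c.nu - 1) * s0 ^ (c.mu + c.nu - 1))

def G1tilG (c : Cst) (s0 h ht : ℝ) : ℝ :=
  H1supG c s0 h * Phi1tilG c s0 h ht
    + H1tilG c s0 h ht / (c.L1m * (c.mu + c.nu - 1) * s0 ^ (c.mu + c.nu - 1))

/-- `ε1` as a function of the values `h` of `Hinf`, `hs` of `Hsup`, `ht` of `Htil`. -/
def eps1G (c : Cst) (s0 h hs ht : ℝ) : ℝ :=
  2 * s0 ^ c.nu * c.Q * Real.exp (-s0 ^ 2) * Phi1tilG c s0 h ht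
    + 2 * c.D1s * (2 * G1supG c s0 h * hs * ht / h ^ 4 + G1tilG c s0 h ht / h ^ 2)

def E1inf (c : Cst) (s0 r0 : ℝ) : ℝ := E1infG c s0 (Hinf c s0 r0)
def E1til (c : Cst) (s0 r0 : ℝ) : ℝ := E1tilG c s0 (Hinf c s0 r0) (Htil c s0 r0)
def Phi1til (c : Cst) (s0 r0 : ℝ) : ℝ := Phi1tilG c s0 (Hinf c s0 r0) (Htil c s0 r0)
def H1sup (c : Cst) (s0 r0 : ℝ) : ℝ := H1supG c s0 (Hinf c s0 r0)
def H1til (c : Cst) (s0 r0 : ℝ) : ℝ := H1tilG c s0 (Hinf c s0 r0) (Htil c s0 r0)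
def G1sup (c : Cst) (s0 r0 : ℝ) : ℝ := G1supG c s0 (Hinf c s0 r0)
def G1til (c : Cst) (s0 r0 : ℝ) : ℝ := G1tilG c s0 (Hinf c s0 r0) (Htil c s0 r0)
def eps1 (c : Cst) (s0 r0 : ℝ) : ℝ := eps1G c s0 (Hinf c s0 r0) (Hsup c s0 r0) (Htil c s0 r0)

/-- `j1(s0) = lim_{r0→∞} ε1(r0,s0)`: the same expression with `Hinf, Hsup, Htil`
replaced by their limits as `r0 → ∞`. -/
def j1 (c : Cst) (s0 : ℝ) : ℝ := eps1G c s0 (HinfI c s0) (HsupI c s0) (HtilI c s0)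

def E2inf (c : Cst) (s0 r0 : ℝ) : ℝ :=
  Real.exp (-(c.a * c.N2M / (c.L2m * (c.mu - 1) * r0 ^ (2 * c.mu - 2))
    + c.D2 * c.K2M / (Hinf c s0 r0 * c.L2m * (2 * c.mu + c.nu - 1) * r0 ^ (2 * c.mu + c.nu - 1))))

def E2til (c : Cst) (s0 r0 : ℝ) : ℝ :=
  2 * c.a * (c.Nt2 / (c.L2m * (c.mu - 2) * r0 ^ (c.mu - 2))
      + c.N2M * c.Lt2 / (c.L2m ^ 2 * (3 * c.mu - 2) * r0 ^ (3 * c.mu - 2)))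
    + c.D2 * (c.Kt2 / (Hinf c s0 r0 * c.L2m * (2 * c.mu + c.nu - 1) * r0 ^ (2 * c.mu + c.nu - 1))
      + c.K2M / (Hinf c s0 r0 * c.L2m)
        * (Htil c s0 r0 / (Hinf c s0 r0 * (2 * c.mu + c.nu - 1) * r0 ^ (2 * c.mu + c.nu - 1))
          + c.Lt2 / (c.L2m * (3 * c.mu + c.nu - 1) * r0 ^ (3 * c.mu + c.nu - 1))))

def Phi2til (c : Cst) (s0 r0 : ℝ) : ℝ :=
  E2til c s0 r0 / (c.L2m * (c.mu + c.nu - 1) * r0 ^ (c.mu + c.nu - 1))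
    + c.Lt2 / (c.L2m ^ 2 * (2 * c.mu + c.nu - 1) * r0 ^ (2 * c.mu + c.nu - 1))

/-- `Φ2inf(∞)(r0,s0)`. -/
def Phi2infC (c : Cst) (s0 r0 : ℝ) : ℝ :=
  E2inf c s0 r0 / (c.L2M * (c.mu + c.nu - 1) * r0 ^ (c.mu + c.nu - 1))

/-- `Φ2sup(r0)`. -/
def Phi2supC (c : Cst) (r0 : ℝ) : ℝ := 1 / (c.L2m * (c.mu + c.nu - 1) * r0 ^ (c.mu + c.nu - 1))

def H2sup (c : Cst) (s0 r0 : ℝ) : ℝ :=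
  c.K2M / (E2inf c s0 r0 * (c.mu + c.nu - 1) * r0 ^ (c.mu + c.nu - 1))

def H2til (c : Cst) (s0 r0 : ℝ) : ℝ :=
  (c.Kt2 + c.K2M * E2til c s0 r0 / E2inf c s0 r0)
    / (E2inf c s0 r0 * (c.mu + c.nu - 1) * r0 ^ (c.mu + c.nu - 1))

def G2sup (c : Cst) (s0 r0 : ℝ) : ℝ :=
  H2sup c s0 r0 / (c.L2m * (c.mu + c.nu - 1) * r0 ^ (c.mu + c.nu - 1))

def G2til (c : Cst) (s0 r0 : ℝ) : ℝ :=
  H2sup c s0 r0 * Phi2til c s0 r0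
    + H2til c s0 r0 / (c.L2m * (c.mu + c.nu - 1) * r0 ^ (c.mu + c.nu - 1))

def eps21 (c : Cst) (s0 r0 : ℝ) : ℝ := 2 * Phi2til c s0 r0 / Phi2infC c s0 r0

def eps22 (c : Cst) (s0 r0 : ℝ) : ℝ :=
  G2til c s0 r0 / Hinf c s0 r0 ^ 2
    + 2 * G2sup c s0 r0 * Hsup c s0 r0 * Htil c s0 r0 / Hinf c s0 r0 ^ 4

def eps23 (c : Cst) (s0 r0 : ℝ) : ℝ :=
  Phi2supC c r0 / Phi2infC c s0 r0 * eps22 c s0 r0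
    + G2sup c s0 r0 / Hinf c s0 r0 ^ 2 * eps21 c s0 r0

def eps2 (c : Cst) (s0 r0 : ℝ) : ℝ := eps21 c s0 r0 + eps22 c s0 r0 + eps23 c s0 r0


/-!
`V1(f1,f2)` is assembled from primitives of functions continuous on `[s0,r0]`, hence is
continuous. On `[r0,∞)` the bounds (A2) with `μ > 2` dominate every integrand by a multiple of
`v ^ p` with `p < -1`: first the exponent density of `E2`, so that `E2` stays between a positive
constant and `1`; then the integrand of `H2`, so that `H2` is bounded; and then the integrands of
`Φ2` and `G2`. So `Φ2(η)` and `G2(η)` increase to finite limits with `Φ2(∞) > 0`, and `V2` is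
continuous, bounded, vanishes at `r0` and tends to `(D2* G2(∞)/H² - 1) - D2* G2(∞)/H² = -1`.

For the fixed point, `𝒦` is realised as the complete metric space `C_b[s0,r0] × ℳ`, where `ℳ` is
closed in `C_b[r0,∞)` because uniform limits preserve the value at `r0` and the limit at `∞`;
the distance there is `pairNorm` of the extended functions, so Banach's fixed point theorem
applies. Uniqueness needs only the contraction inequality: two fixed points `p, q` satisfy
`‖p - q‖ ≤ ε ‖p - q‖`.
-/

open scoped BoundedContinuousFunction
open Set

section Primitives

theorem continuousOn_primitive_of_Icc {g : ℝ → ℝ} {a b : ℝ} (hab : a ≤ b)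
    (hg : ContinuousOn g (Icc a b)) :
    ContinuousOn (fun x => ∫ v in a..x, g v) (Icc a b) := by
  rw [← uIcc_of_le hab] at hg ⊢
  exact intervalIntegral.continuousOn_primitive_interval hg.integrableOn_Icc

theorem continuousOn_primitive_of_Ici {g : ℝ → ℝ} {a : ℝ} (hg : ContinuousOn g (Ici a)) :
    ContinuousOn (fun x => ∫ v in a..x, g v) (Ici a) := by
  intro x hx
  have hx1 : a ≤ x + 1 := by linarith [mem_Ici.1 hx]
  refine ((continuousOn_primitive_of_Icc hx1 (hg.mono Icc_subset_Ici_self)) x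
    ⟨hx, by linarith⟩).mono_of_mem_nhdsWithin ?_
  exact mem_of_superset (inter_mem_nhdsWithin _ (Iio_mem_nhds (by linarith : x < x + 1)))
    fun y hy => ⟨hy.1, hy.2.le⟩

theorem integrableOn_Ioi_of_abs_le_rpow {g : ℝ → ℝ} {a C p : ℝ} (ha : 0 < a) (hp : p < -1)
    (hg : ContinuousOn g (Ici a)) (hle : ∀ v ∈ Ici a, |g v| ≤ C * v ^ p) :
    IntegrableOn g (Ioi a) :=
  ((integrableOn_Ioi_rpow_of_lt hp ha).const_mul C).mono'
    ((hg.mono Ioi_subset_Ici_self).aestronglyMeasurable measurableSet_Ioi)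
    ((ae_restrict_iff' measurableSet_Ioi).2
      (.of_forall fun v hv => hle v (Ioi_subset_Ici_self hv)))

theorem intervalIntegral_le_integral_Ioi {g : ℝ → ℝ} {a η : ℝ} (hg : ∀ v ∈ Ioi a, 0 ≤ g v)
    (hint : IntegrableOn g (Ioi a)) (hη : a ≤ η) :
    ∫ v in a..η, g v ≤ ∫ v in Ioi a, g v := by
  rw [intervalIntegral.integral_of_le hη]
  exact setIntegral_mono_set hint ((ae_restrict_iff' measurableSet_Ioi).2 (.of_forall hg))
    Ioc_subset_Ioi_self.eventuallyLE

theorem integral_Ioi_pos {g : ℝ → ℝ} {a : ℝ} (hg : ∀ v ∈ Ioi a, 0 < g v)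
    (hint : IntegrableOn g (Ioi a)) : 0 < ∫ v in Ioi a, g v := by
  rw [setIntegral_pos_iff_support_of_nonneg_ae
    ((ae_restrict_iff' measurableSet_Ioi).2 (.of_forall fun v hv => (hg v hv).le)) hint,
    inter_eq_right.2 fun v hv => Function.mem_support.2 (hg v hv).ne', Real.volume_Ioi]
  exact ENNReal.zero_lt_top

theorem exp_neg_primitive_mem_Icc {w : ℝ → ℝ} {a η : ℝ} (hw : ∀ v ∈ Ici a, 0 ≤ w v)
    (hint : IntegrableOn w (Ioi a)) (hη : a ≤ η) :
    Real.exp (-∫ v in a..η, w v) ∈ Icc (Real.exp (-∫ v in Ioi a, w v)) 1 := by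
  refine ⟨Real.exp_le_exp.2 (neg_le_neg ?_), Real.exp_le_one_iff.2 (neg_nonpos.2 ?_)⟩
  · exact intervalIntegral_le_integral_Ioi (fun v hv => hw v (Ioi_subset_Ici_self hv)) hint hη
  · exact intervalIntegral.integral_nonneg hη fun v hv => hw v hv.1

end Primitives

theorem div_le_mul_rpow_sub {x y v A B p q : ℝ} (hv : 0 < v) (hB : 0 < B) (hx0 : 0 ≤ x)
    (hx : x ≤ A * v ^ p) (hy : B * v ^ q ≤ y) : x / y ≤ A / B * v ^ (p - q) := by
  have hq : 0 < v ^ q := Real.rpow_pos_of_pos hv q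
  calc x / y ≤ A * v ^ p / (B * v ^ q) := div_le_div₀ (hx0.trans hx) hx (by positivity) hy
    _ = A / B * v ^ (p - q) := by rw [Real.rpow_sub hv]; field_simp

theorem mul_rpow_add_le {L Lm v μ ν : ℝ} (hv : 0 < v) (h : Lm * v ^ μ ≤ L) :
    Lm * v ^ (μ + ν) ≤ L * v ^ ν := by
  rw [Real.rpow_add hv, ← mul_assoc]
  exact mul_le_mul_of_nonneg_right h (Real.rpow_nonneg hv.le ν)

section FunctionClasses

theorem exists_abs_le_of_mem_C1 {s0 r0 : ℝ} {f : ℝ → ℝ} (hf : f ∈ C1 s0 r0) :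
    ∃ C, ∀ x ∈ Icc s0 r0, |f x| ≤ C :=
  isCompact_Icc.exists_bound_of_continuousOn hf

theorem exists_abs_sub_le_of_mem_Mset {r0 : ℝ} {f g : ℝ → ℝ} (hf : f ∈ Mset r0)
    (hg : g ∈ Mset r0) : ∃ C, ∀ x ∈ Ici r0, |(f - g) x| ≤ C := by
  obtain ⟨Cf, hCf⟩ := hf.2.1
  obtain ⟨Cg, hCg⟩ := hg.2.1
  exact ⟨Cf + Cg, fun x hx => (abs_sub _ _).trans (add_le_add (hCf x hx) (hCg x hx))⟩

theorem Mset_nonempty (r0 : ℝ) : (Mset r0).Nonempty := by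
  refine ⟨fun x => max (-1) (r0 - x), by fun_prop, ⟨1, fun x hx => ?_⟩, by simp, ?_⟩
  · exact abs_le.2 ⟨le_max_left _ _, max_le (by norm_num) (by linarith [mem_Ici.1 hx])⟩
  · exact tendsto_const_nhds.congr'
      ((eventually_ge_atTop (r0 + 1)).mono fun x hx => (max_eq_left (by linarith)).symm)

theorem mem_Mset_of_eqOn {f g : ℝ → ℝ} {r0 : ℝ} (hf : f ∈ Mset r0) (h : EqOn f g (Ici r0)) :
    g ∈ Mset r0 := by
  obtain ⟨hc, ⟨C, hC⟩, h0, hlim⟩ := hf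
  refine ⟨hc.congr h.symm, ⟨C, fun x hx => h hx ▸ hC x hx⟩, h self_mem_Ici ▸ h0, ?_⟩
  exact hlim.congr' ((eventually_ge_atTop r0).mono fun x hx => h hx)

theorem mem_Mset_of_primitives {φ g : ℝ → ℝ} {r0 B : ℝ}
    (hφc : ContinuousOn φ (Ici r0)) (hφ : ∀ v ∈ Ici r0, 0 < φ v)
    (hφi : IntegrableOn φ (Ioi r0)) (hgc : ContinuousOn g (Ici r0))
    (hg : ∀ v ∈ Ici r0, 0 ≤ g v) (hgi : IntegrableOn g (Ioi r0)) :
    (fun η => (B * limUnder atTop (fun η => ∫ v in r0..η, g v) - 1)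
        * ((∫ v in r0..η, φ v) / ∫ v in Ioi r0, φ v) - B * ∫ v in r0..η, g v) ∈ Mset r0 := by
  set Φ := ∫ v in Ioi r0, φ v
  set Γ := ∫ v in Ioi r0, g v
  have hΦ : 0 < Φ := integral_Ioi_pos (fun v hv => hφ v (Ioi_subset_Ici_self hv)) hφi
  have hΦlim : Tendsto (fun η => ∫ v in r0..η, φ v) atTop (𝓝 Φ) :=
    intervalIntegral_tendsto_integral_Ioi r0 hφi tendsto_id
  have hΓlim : Tendsto (fun η => ∫ v in r0..η, g v) atTop (𝓝 Γ) :=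
    intervalIntegral_tendsto_integral_Ioi r0 hgi tendsto_id
  rw [hΓlim.limUnder_eq]
  refine ⟨?_, ⟨|B * Γ - 1| + |B| * Γ, fun η hη => ?_⟩, by simp, ?_⟩
  · exact (continuousOn_const.mul ((continuousOn_primitive_of_Ici hφc).div_const _)).sub
      (continuousOn_const.mul (continuousOn_primitive_of_Ici hgc))
  · have hφη : 0 ≤ ∫ v in r0..η, φ v :=
      intervalIntegral.integral_nonneg hη fun v hv => (hφ v hv.1).le
    have hgη : 0 ≤ ∫ v in r0..η, g v := intervalIntegral.integral_nonneg hη fun v hv => hg v hv.1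
    have hratio : |(∫ v in r0..η, φ v) / Φ| ≤ 1 := by
      rw [abs_of_nonneg (div_nonneg hφη hΦ.le), div_le_one hΦ]
      exact intervalIntegral_le_integral_Ioi (fun v hv => (hφ v (Ioi_subset_Ici_self hv)).le)
        hφi hη
    have hprim : |∫ v in r0..η, g v| ≤ Γ := by
      rw [abs_of_nonneg hgη]
      exact intervalIntegral_le_integral_Ioi (fun v hv => hg v (Ioi_subset_Ici_self hv)) hgi hη
    calc _ ≤ |(B * Γ - 1) * ((∫ v in r0..η, φ v) / Φ)| + |B * ∫ v in r0..η, g v| :=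
          abs_sub _ _
      _ ≤ |B * Γ - 1| * 1 + |B| * Γ := by
        rw [abs_mul, abs_mul]
        gcongr
      _ = _ := by ring
  · have h := ((hΦlim.div_const Φ).const_mul (B * Γ - 1)).sub (hΓlim.const_mul B)
    rwa [div_self hΦ.ne', mul_one, sub_sub_cancel_left] at h

end FunctionClasses

section Operator

variable {c : Cst} {s0 r0 : ℝ} {L1 N1 K1 L2 N2 K2 : (ℝ → ℝ) → ℝ → ℝ} {f1 f2 : ℝ → ℝ}

theorem head_pos (hpos : PosC c s0 r0) (hA : Assum c s0 r0 L1 N1 K1 L2 N2 K2)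
    (hf1 : f1 ∈ C1 s0 r0) {v : ℝ} (hv : v ∈ Icc s0 r0) :
    0 < v ∧ 0 < L1 f1 v ∧ 0 < K1 f1 v := by
  obtain ⟨-, -, -, -, hs0, -, -, -, -, -, -, hL1m, -, -, -, hK1m, -⟩ := hpos
  have hv0 : 0 < v := hs0.trans_le hv.1
  obtain ⟨hL, -, -, -, hK, -⟩ := hA.2.2.1 f1 hf1 v hv
  exact ⟨hv0, (mul_pos hL1m (Real.rpow_pos_of_pos hv0 _)).trans_le hL,
    (mul_pos hK1m (Real.rpow_pos_of_pos hv0 _)).trans_le hK⟩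

theorem tail_pos (hpos : PosC c s0 r0) (hA : Assum c s0 r0 L1 N1 K1 L2 N2 K2)
    (hf2 : f2 ∈ Mset r0) {v : ℝ} (hv : v ∈ Ici r0) :
    0 < v ∧ 0 < L2 f2 v ∧ 0 < N2 f2 v ∧ 0 < K2 f2 v := by
  obtain ⟨-, -, -, -, hs0, hsr, -, -, -, -, -, -, -, -, -, -, -, hL2m, -, hN2m, -, hK2m, -⟩ :=
    hpos
  have hv0 : 0 < v := (hs0.trans hsr).trans_le hv
  obtain ⟨hL, -, hN, -, hK, -⟩ := hA.2.2.2.1 f2 hf2 v hv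
  exact ⟨hv0, (mul_pos hL2m (Real.rpow_pos_of_pos hv0 _)).trans_le hL,
    (mul_pos hN2m (Real.rpow_pos_of_pos hv0 _)).trans_le hN,
    (mul_pos hK2m (Real.rpow_pos_of_pos hv0 _)).trans_le hK⟩

theorem Hf_pos (hpos : PosC c s0 r0) (hA : Assum c s0 r0 L1 N1 K1 L2 N2 K2)
    (hf1 : f1 ∈ C1 s0 r0) (hf2 : f2 ∈ Mset r0) : 0 < Hf c s0 r0 L1 N1 K1 L2 N2 K2 f1 f2 := by
  have ⟨_, hν, _, _, _, hsr, _⟩ := hpos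
  have hcont : ContinuousOn (fun v => K1 f1 v / v ^ c.nu) (uIcc s0 r0) := by
    rw [uIcc_of_le hsr.le]
    exact (hA.1 f1 hf1).2.2.div (Real.continuous_rpow_const hν.le).continuousOn
      fun v hv => (Real.rpow_pos_of_pos (head_pos hpos hA hf1 hv).1 _).ne'
  have hhead : 0 < ∫ v in s0..r0, K1 f1 v / v ^ c.nu := by
    refine intervalIntegral.intervalIntegral_pos_of_pos_on hcont.intervalIntegrable
      (fun v hv => ?_) hsr
    obtain ⟨hv0, -, hK⟩ := head_pos hpos hA hf1 (Ioo_subset_Icc_self hv)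
    exact div_pos hK (Real.rpow_pos_of_pos hv0 _)
  have htail : 0 ≤ ∫ v in Ioi r0, K2 f2 v / v ^ c.nu := by
    refine setIntegral_nonneg measurableSet_Ioi fun v hv => ?_
    obtain ⟨hv0, -, -, hK⟩ := tail_pos hpos hA hf2 (Ioi_subset_Ici_self hv)
    exact (div_pos hK (Real.rpow_pos_of_pos hv0 _)).le
  exact add_pos_of_pos_of_nonneg hhead htail

theorem V1f_mem_C1 (hpos : PosC c s0 r0) (hA : Assum c s0 r0 L1 N1 K1 L2 N2 K2)
    (hf1 : f1 ∈ C1 s0 r0) : (fun η => V1f c s0 r0 L1 N1 K1 L2 N2 K2 f1 f2 η) ∈ C1 s0 r0 := by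
  have ⟨_, hν, _, _, _, hsr, _⟩ := hpos
  obtain ⟨hL, hN, hK⟩ := hA.1 f1 hf1
  have hpow : ContinuousOn (fun v : ℝ => v ^ c.nu) (Icc s0 r0) :=
    (Real.continuous_rpow_const hν.le).continuousOn
  have hLpow : ContinuousOn (fun v => L1 f1 v * v ^ c.nu) (Icc s0 r0) := hL.mul hpow
  have hLpow0 : ∀ v ∈ Icc s0 r0, L1 f1 v * v ^ c.nu ≠ 0 := fun v hv =>
    have h := head_pos hpos hA hf1 hv
    (mul_pos h.2.1 (Real.rpow_pos_of_pos h.1 _)).ne'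
  have hE : ContinuousOn (E1f c s0 r0 L1 N1 K1 L2 N2 K2 f1 f2) (Icc s0 r0) :=
    Real.continuous_exp.comp_continuousOn (continuousOn_primitive_of_Icc hsr.le
      (((continuousOn_const.mul continuousOn_id).mul
        (hN.div hL fun v hv => (head_pos hpos hA hf1 hv).2.1.ne')).add
        (continuousOn_const.mul (hK.div hLpow hLpow0)))).neg
  have hΦ : ContinuousOn (Phi1f c s0 r0 L1 N1 K1 L2 N2 K2 f1 f2) (Icc s0 r0) :=
    continuousOn_primitive_of_Icc hsr.le (hE.div hLpow hLpow0)
  have hH : ContinuousOn (H1f c s0 r0 L1 N1 K1 L2 N2 K2 f1 f2) (Icc s0 r0) :=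
    continuousOn_primitive_of_Icc hsr.le (hK.div (hpow.mul hE) fun v hv =>
      (mul_pos (Real.rpow_pos_of_pos (head_pos hpos hA hf1 hv).1 _) (Real.exp_pos _)).ne')
  have hG : ContinuousOn (G1f c s0 r0 L1 N1 K1 L2 N2 K2 f1 f2) (Icc s0 r0) :=
    continuousOn_primitive_of_Icc hsr.le ((hE.mul hH).div hLpow hLpow0)
  exact (continuousOn_const.mul (continuousOn_const.sub hΦ)).add
    (continuousOn_const.mul (continuousOn_const.sub hG))

def tailDensity (c : Cst) (s0 r0 : ℝ) (L1 N1 K1 L2 N2 K2 : (ℝ → ℝ) → ℝ → ℝ) (f1 f2 : ℝ → ℝ)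
    (v : ℝ) : ℝ :=
  2 * c.a * v * (N2 f2 v / L2 f2 v)
    + c.D2 / Hf c s0 r0 L1 N1 K1 L2 N2 K2 f1 f2 * (K2 f2 v / (L2 f2 v * v ^ c.nu))

theorem tailDensity_continuousOn_nonneg_integrableOn (hpos : PosC c s0 r0)
    (hA : Assum c s0 r0 L1 N1 K1 L2 N2 K2) (hf2 : f2 ∈ Mset r0)
    (hH : 0 < Hf c s0 r0 L1 N1 K1 L2 N2 K2 f1 f2) :
    ContinuousOn (tailDensity c s0 r0 L1 N1 K1 L2 N2 K2 f1 f2) (Ici r0) ∧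
      (∀ v ∈ Ici r0, 0 ≤ tailDensity c s0 r0 L1 N1 K1 L2 N2 K2 f1 f2 v) ∧
      IntegrableOn (tailDensity c s0 r0 L1 N1 K1 L2 N2 K2 f1 f2) (Ioi r0) := by
  have ⟨ha, hν, _, hμ, hs0, hsr, _, hD2, _, _, _, _, _, _, _, _, _, hL2m, _⟩ := hpos
  obtain ⟨hL, hN, hK⟩ := hA.2.1 f2 hf2
  set D := c.D2 / Hf c s0 r0 L1 N1 K1 L2 N2 K2 f1 f2
  have hD : 0 ≤ D := (div_pos hD2 hH).le
  have hc1 : ContinuousOn (fun v => 2 * c.a * v * (N2 f2 v / L2 f2 v)) (Ici r0) :=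
    (continuousOn_const.mul continuousOn_id).mul
      (hN.div hL fun v hv => (tail_pos hpos hA hf2 hv).2.1.ne')
  have hc2 : ContinuousOn (fun v => D * (K2 f2 v / (L2 f2 v * v ^ c.nu))) (Ici r0) :=
    continuousOn_const.mul (hK.div (hL.mul (Real.continuous_rpow_const hν.le).continuousOn)
      fun v hv =>
        have h := tail_pos hpos hA hf2 hv
        (mul_pos h.2.1 (Real.rpow_pos_of_pos h.1 _)).ne')
  have hb1 : ∀ v ∈ Ici r0, 0 ≤ 2 * c.a * v * (N2 f2 v / L2 f2 v) ∧
      2 * c.a * v * (N2 f2 v / L2 f2 v)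
        ≤ 2 * c.a * (c.N2M / c.L2m) * v ^ (1 + (-c.mu - c.mu)) := by
    intro v hv
    obtain ⟨hv0, hLv, hNv, -⟩ := tail_pos hpos hA hf2 hv
    obtain ⟨hLb, -, -, hNb, -⟩ := hA.2.2.2.1 f2 hf2 v hv
    refine ⟨by positivity, ?_⟩
    calc 2 * c.a * v * (N2 f2 v / L2 f2 v)
        ≤ 2 * c.a * v * (c.N2M / c.L2m * v ^ (-c.mu - c.mu)) :=
          mul_le_mul_of_nonneg_left (div_le_mul_rpow_sub hv0 hL2m hNv.le hNb hLb) (by positivity)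
      _ = _ := by rw [Real.rpow_add hv0, Real.rpow_one]; ring
  have hb2 : ∀ v ∈ Ici r0, 0 ≤ D * (K2 f2 v / (L2 f2 v * v ^ c.nu)) ∧
      D * (K2 f2 v / (L2 f2 v * v ^ c.nu))
        ≤ D * (c.K2M / c.L2m) * v ^ (-c.mu - (c.mu + c.nu)) := by
    intro v hv
    obtain ⟨hv0, hLv, -, hKv⟩ := tail_pos hpos hA hf2 hv
    obtain ⟨hLb, -, -, -, -, hKb⟩ := hA.2.2.2.1 f2 hf2 v hv
    refine ⟨by positivity, ?_⟩
    rw [mul_assoc]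
    exact mul_le_mul_of_nonneg_left
      (div_le_mul_rpow_sub hv0 hL2m hKv.le hKb (mul_rpow_add_le hv0 hLb)) hD
  have hr0 : 0 < r0 := hs0.trans hsr
  refine ⟨hc1.add hc2, fun v hv => add_nonneg (hb1 v hv).1 (hb2 v hv).1, ?_⟩
  exact (integrableOn_Ioi_of_abs_le_rpow hr0 (by linarith) hc1 fun v hv =>
      abs_of_nonneg (hb1 v hv).1 ▸ (hb1 v hv).2).add
    (integrableOn_Ioi_of_abs_le_rpow hr0 (by linarith) hc2 fun v hv =>
      abs_of_nonneg (hb2 v hv).1 ▸ (hb2 v hv).2)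

theorem E2f_bounds (hpos : PosC c s0 r0) (hA : Assum c s0 r0 L1 N1 K1 L2 N2 K2)
    (hf2 : f2 ∈ Mset r0) (hH : 0 < Hf c s0 r0 L1 N1 K1 L2 N2 K2 f1 f2) :
    ContinuousOn (E2f c s0 r0 L1 N1 K1 L2 N2 K2 f1 f2) (Ici r0) ∧
      ∃ m > 0, ∀ η ∈ Ici r0, E2f c s0 r0 L1 N1 K1 L2 N2 K2 f1 f2 η ∈ Icc m 1 := by
  obtain ⟨hc, h0, hi⟩ := tailDensity_continuousOn_nonneg_integrableOn hpos hA hf2 hH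
  exact ⟨Real.continuous_exp.comp_continuousOn (continuousOn_primitive_of_Ici hc).neg,
    _, Real.exp_pos _, fun η hη => exp_neg_primitive_mem_Icc h0 hi hη⟩

theorem H2f_bounds (hpos : PosC c s0 r0) (hA : Assum c s0 r0 L1 N1 K1 L2 N2 K2)
    (hf2 : f2 ∈ Mset r0) (hH : 0 < Hf c s0 r0 L1 N1 K1 L2 N2 K2 f1 f2) :
    ContinuousOn (H2f c s0 r0 L1 N1 K1 L2 N2 K2 f1 f2) (Ici r0) ∧
      ∃ M, ∀ η ∈ Ici r0, H2f c s0 r0 L1 N1 K1 L2 N2 K2 f1 f2 η ∈ Icc 0 M := by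
  have ⟨_, hν, _, hμ, hs0, hsr, _⟩ := hpos
  obtain ⟨hEc, m, hm, hE⟩ := E2f_bounds hpos hA hf2 hH
  set E := E2f c s0 r0 L1 N1 K1 L2 N2 K2 f1 f2
  have hq : ∀ v ∈ Ici r0, 0 ≤ K2 f2 v / (v ^ c.nu * E v) ∧
      K2 f2 v / (v ^ c.nu * E v) ≤ c.K2M / m * v ^ (-c.mu - c.nu) := by
    intro v hv
    obtain ⟨hv0, -, -, hKv⟩ := tail_pos hpos hA hf2 hv
    have hEv := hE v hv
    refine ⟨div_nonneg hKv.le (mul_pos (Real.rpow_pos_of_pos hv0 _) (hm.trans_le hEv.1)).le,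
      div_le_mul_rpow_sub hv0 hm hKv.le (hA.2.2.2.1 f2 hf2 v hv).2.2.2.2.2 ?_⟩
    rw [mul_comm]
    exact mul_le_mul_of_nonneg_left hEv.1 (Real.rpow_nonneg hv0.le _)
  have hqc : ContinuousOn (fun v => K2 f2 v / (v ^ c.nu * E v)) (Ici r0) :=
    (hA.2.1 f2 hf2).2.2.div ((Real.continuous_rpow_const hν.le).continuousOn.mul hEc)
      fun v hv => (mul_pos (Real.rpow_pos_of_pos (tail_pos hpos hA hf2 hv).1 _)
        (hm.trans_le (hE v hv).1)).ne'
  have hqi : IntegrableOn (fun v => K2 f2 v / (v ^ c.nu * E v)) (Ioi r0) :=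
    integrableOn_Ioi_of_abs_le_rpow (hs0.trans hsr) (by linarith) hqc fun v hv =>
      abs_of_nonneg (hq v hv).1 ▸ (hq v hv).2
  exact ⟨continuousOn_primitive_of_Ici hqc, _, fun η hη =>
    ⟨intervalIntegral.integral_nonneg hη fun v hv => (hq v hv.1).1,
      intervalIntegral_le_integral_Ioi (fun v hv => (hq v (Ioi_subset_Ici_self hv)).1) hqi hη⟩⟩

theorem continuousOn_integrableOn_div_L2_rpow (hpos : PosC c s0 r0)
    (hA : Assum c s0 r0 L1 N1 K1 L2 N2 K2) (hf2 : f2 ∈ Mset r0) {g : ℝ → ℝ} {X : ℝ}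
    (hgc : ContinuousOn g (Ici r0)) (hg : ∀ v ∈ Ici r0, g v ∈ Icc 0 X) :
    ContinuousOn (fun v => g v / (L2 f2 v * v ^ c.nu)) (Ici r0) ∧
      IntegrableOn (fun v => g v / (L2 f2 v * v ^ c.nu)) (Ioi r0) := by
  have ⟨_, hν, _, hμ, hs0, hsr, _, _, _, _, _, _, _, _, _, _, _, hL2m, _⟩ := hpos
  have hLpos : ∀ v ∈ Ici r0, 0 < L2 f2 v * v ^ c.nu := fun v hv =>
    have h := tail_pos hpos hA hf2 hv
    mul_pos h.2.1 (Real.rpow_pos_of_pos h.1 _)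
  have hc : ContinuousOn (fun v => g v / (L2 f2 v * v ^ c.nu)) (Ici r0) :=
    hgc.div ((hA.2.1 f2 hf2).1.mul (Real.continuous_rpow_const hν.le).continuousOn)
      fun v hv => (hLpos v hv).ne'
  refine ⟨hc, integrableOn_Ioi_of_abs_le_rpow (C := X / c.L2m) (hs0.trans hsr)
    (by linarith : 0 - (c.mu + c.nu) < -1) hc fun v hv => ?_⟩
  have hv0 := (tail_pos hpos hA hf2 hv).1
  rw [abs_of_nonneg (div_nonneg (hg v hv).1 (hLpos v hv).le)]
  exact div_le_mul_rpow_sub hv0 hL2m (hg v hv).1 (by simpa using (hg v hv).2)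
    (mul_rpow_add_le hv0 (hA.2.2.2.1 f2 hf2 v hv).1)

theorem V2f_mem_Mset (hpos : PosC c s0 r0) (hA : Assum c s0 r0 L1 N1 K1 L2 N2 K2)
    (hf1 : f1 ∈ C1 s0 r0) (hf2 : f2 ∈ Mset r0) :
    (fun η => V2f c s0 r0 L1 N1 K1 L2 N2 K2 f1 f2 η) ∈ Mset r0 := by
  have hH := Hf_pos hpos hA hf1 hf2
  obtain ⟨hEc, m, hm, hE⟩ := E2f_bounds hpos hA hf2 hH
  obtain ⟨hHc, M, hHM⟩ := H2f_bounds hpos hA hf2 hH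
  set E := E2f c s0 r0 L1 N1 K1 L2 N2 K2 f1 f2
  have hE0 : ∀ v ∈ Ici r0, 0 < E v := fun v hv => hm.trans_le (hE v hv).1
  obtain ⟨hφc, hφi⟩ := continuousOn_integrableOn_div_L2_rpow hpos hA hf2 hEc
    fun v hv => ⟨(hE0 v hv).le, (hE v hv).2⟩
  obtain ⟨hgc, hgi⟩ := continuousOn_integrableOn_div_L2_rpow hpos hA hf2 (hEc.mul hHc)
    fun v hv => ⟨mul_nonneg (hE0 v hv).le (hHM v hv).1,
      (mul_le_of_le_one_left (hHM v hv).1 (hE v hv).2).trans (hHM v hv).2⟩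
  have hLpos : ∀ v ∈ Ici r0, 0 < L2 f2 v * v ^ c.nu := fun v hv =>
    have h := tail_pos hpos hA hf2 hv
    mul_pos h.2.1 (Real.rpow_pos_of_pos h.1 _)
  exact mem_Mset_of_primitives hφc (fun v hv => div_pos (hE0 v hv) (hLpos v hv)) hφi hgc
    (fun v hv => div_nonneg (mul_nonneg (hE0 v hv).le (hHM v hv).1) (hLpos v hv).le) hgi

end Operator

section SupNorm

theorem supOn_nonneg (S : Set ℝ) (f : ℝ → ℝ) : 0 ≤ supOn S f :=
  Real.iSup_nonneg fun _ => abs_nonneg _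

theorem abs_le_supOn {S : Set ℝ} {f : ℝ → ℝ} (hb : ∃ C, ∀ y ∈ S, |f y| ≤ C) {x : ℝ}
    (hx : x ∈ S) : |f x| ≤ supOn S f := by
  obtain ⟨C, hC⟩ := hb
  exact le_ciSup (f := fun y : S => |f y|) ⟨C, forall_mem_range.2 fun y => hC y y.2⟩ ⟨x, hx⟩

theorem supOn_congr {S : Set ℝ} {f g : ℝ → ℝ} (h : EqOn f g S) : supOn S f = supOn S g :=
  iSup_congr fun x => by rw [h x.2]

theorem pairNorm_nonneg (s0 r0 : ℝ) (f1 f2 g1 g2 : ℝ → ℝ) : 0 ≤ pairNorm s0 r0 f1 f2 g1 g2 :=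
  (supOn_nonneg _ _).trans (le_max_left _ _)

theorem BoundedContinuousFunction.dist_eq_supOn {S : Set ℝ} {F G : S →ᵇ ℝ} {f g : ℝ → ℝ}
    (hf : ∀ x : S, F x = f x) (hg : ∀ x : S, G x = g x) : dist F G = supOn S (f - g) := by
  rw [BoundedContinuousFunction.dist_eq_iSup]
  exact iSup_congr fun x => by rw [hf, hg, Real.dist_eq, Pi.sub_apply]

end SupNorm

section BoundedContinuous

def restrictBCF {S : Set ℝ} (f : ℝ → ℝ) (hc : ContinuousOn f S)
    (hb : ∃ C, ∀ x ∈ S, |f x| ≤ C) : S →ᵇ ℝ where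
  toFun x := f x
  continuous_toFun := hc.domRestrict
  map_bounded' := by
    obtain ⟨C, hC⟩ := hb
    exact ⟨C + C, fun x y => by
      rw [Real.dist_eq]
      exact (abs_sub _ _).trans (add_le_add (hC x x.2) (hC y y.2))⟩

theorem BoundedContinuousFunction.isClosed_setOf_tendsto {α β : Type*} [TopologicalSpace α]
    [PseudoMetricSpace β] (l : Filter α) (b : β) :
    IsClosed {F : α →ᵇ β | Tendsto F l (𝓝 b)} := by
  refine isClosed_iff_clusterPt.2 fun F hF => ?_
  have := hF.neBot
  have hu : TendstoUniformly (fun G : α →ᵇ β => ⇑G) F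
      (𝓝 F ⊓ 𝓟 {G : α →ᵇ β | Tendsto G l (𝓝 b)}) :=
    tendsto_iff_tendstoUniformly.1 (tendsto_id.mono_left inf_le_left)
  exact hu.tendsto_of_eventually_tendsto (eventually_inf_principal.2 (.of_forall fun _ hG => hG))
    tendsto_const_nhds

def MsetBCF (r0 : ℝ) : Set (Ici r0 →ᵇ ℝ) := {G | IciExtend G ∈ Mset r0}

theorem isClosed_MsetBCF (r0 : ℝ) : IsClosed (MsetBCF r0) := by
  have h : MsetBCF r0 = {G : Ici r0 →ᵇ ℝ | G ⟨r0, self_mem_Ici⟩ = 0} ∩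
      {G : Ici r0 →ᵇ ℝ | Tendsto G (map (projIci r0) atTop) (𝓝 (-1))} := by
    ext G
    have hc : Continuous (IciExtend G) :=
      G.continuous.comp ((continuous_const.max continuous_id).subtype_mk _)
    simp only [MsetBCF, Mset, mem_ofPred_eq, mem_inter_iff, tendsto_map'_iff,
      IciExtend_of_mem G self_mem_Ici]
    exact ⟨fun h => ⟨h.2.2.1, h.2.2.2⟩, fun h =>
      ⟨hc.continuousOn, ⟨‖G‖, fun x _ => G.norm_coe_le_norm _⟩, h.1, h.2⟩⟩
  rw [h]
  exact (isClosed_eq (continuous_eval_const _) continuous_const).inter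
    (BoundedContinuousFunction.isClosed_setOf_tendsto _ _)

theorem restrictBCF_mem_MsetBCF {r0 : ℝ} {f : ℝ → ℝ} (hf : f ∈ Mset r0) :
    restrictBCF f hf.1 hf.2.1 ∈ MsetBCF r0 :=
  mem_Mset_of_eqOn hf fun _ hx => (IciExtend_of_mem (restrictBCF f hf.1 hf.2.1) hx).symm

instance (r0 : ℝ) : CompleteSpace (MsetBCF r0) := (isClosed_MsetBCF r0).completeSpace_coe

instance (r0 : ℝ) : Nonempty (MsetBCF r0) :=
  let ⟨_, hf⟩ := Mset_nonempty r0
  ⟨⟨_, restrictBCF_mem_MsetBCF hf⟩⟩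

def pairExtend {s0 r0 : ℝ} (hsr : s0 ≤ r0) (p : (Icc s0 r0 →ᵇ ℝ) × MsetBCF r0) :
    (ℝ → ℝ) × (ℝ → ℝ) :=
  (IccExtend hsr p.1, IciExtend p.2.1)

theorem pairExtend_mem {s0 r0 : ℝ} (hsr : s0 ≤ r0) (p : (Icc s0 r0 →ᵇ ℝ) × MsetBCF r0) :
    (pairExtend hsr p).1 ∈ C1 s0 r0 ∧ (pairExtend hsr p).2 ∈ Mset r0 :=
  ⟨(p.1.continuous.comp continuous_projIcc).continuousOn, p.2.2⟩

theorem dist_eq_pairNorm_pairExtend {s0 r0 : ℝ} (hsr : s0 ≤ r0)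
    (p q : (Icc s0 r0 →ᵇ ℝ) × MsetBCF r0) :
    dist p q = pairNorm s0 r0 (pairExtend hsr p).1 (pairExtend hsr p).2
      (pairExtend hsr q).1 (pairExtend hsr q).2 := by
  rw [Prod.dist_eq, Subtype.dist_eq, pairNorm,
    BoundedContinuousFunction.dist_eq_supOn (fun x => (IccExtend_val hsr _ x).symm)
      (fun x => (IccExtend_val hsr _ x).symm),
    BoundedContinuousFunction.dist_eq_supOn (fun x => (IciExtend_of_mem _ x.2).symm)
      (fun x => (IciExtend_of_mem _ x.2).symm)]
  rfl

end BoundedContinuous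
section FixedPoint

variable {s0 r0 : ℝ} (Ψ1 Ψ2 : (ℝ → ℝ) → (ℝ → ℝ) → ℝ → ℝ) {ε : ℝ}

def IsContractionOn (s0 r0 ε : ℝ) (Ψ1 Ψ2 : (ℝ → ℝ) → (ℝ → ℝ) → ℝ → ℝ) : Prop :=
  ∀ f1 ∈ C1 s0 r0, ∀ f2 ∈ Mset r0, ∀ g1 ∈ C1 s0 r0, ∀ g2 ∈ Mset r0,
    max (supOn (Icc s0 r0) (fun η => Ψ1 f1 f2 η - Ψ1 g1 g2 η))
        (supOn (Ici r0) (fun η => Ψ2 f1 f2 η - Ψ2 g1 g2 η))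
      ≤ ε * pairNorm s0 r0 f1 f2 g1 g2

theorem exists_fixedPoint_of_contraction (hsr : s0 ≤ r0)
    (hmaps : ∀ f1 ∈ C1 s0 r0, ∀ f2 ∈ Mset r0, Ψ1 f1 f2 ∈ C1 s0 r0 ∧ Ψ2 f1 f2 ∈ Mset r0)
    (hε : ε < 1) (hcon : IsContractionOn s0 r0 ε Ψ1 Ψ2) :
    ∃ f1 f2, f1 ∈ C1 s0 r0 ∧ f2 ∈ Mset r0 ∧
      EqOn (Ψ1 f1 f2) f1 (Icc s0 r0) ∧ EqOn (Ψ2 f1 f2) f2 (Ici r0) := by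
  let T : (Icc s0 r0 →ᵇ ℝ) × MsetBCF r0 → (Icc s0 r0 →ᵇ ℝ) × MsetBCF r0 := fun p =>
    have h := hmaps _ (pairExtend_mem hsr p).1 _ (pairExtend_mem hsr p).2
    (restrictBCF _ h.1 (exists_abs_le_of_mem_C1 h.1),
      ⟨restrictBCF _ h.2.1 h.2.2.1, restrictBCF_mem_MsetBCF h.2⟩)
  have hT : ContractingWith ε.toNNReal T := by
    refine ⟨by simpa using hε, LipschitzWith.of_dist_le_mul fun p q => ?_⟩
    rw [Prod.dist_eq, Subtype.dist_eq,
      BoundedContinuousFunction.dist_eq_supOn (fun _ => rfl) (fun _ => rfl),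
      BoundedContinuousFunction.dist_eq_supOn (fun _ => rfl) (fun _ => rfl),
      dist_eq_pairNorm_pairExtend hsr]
    exact (hcon _ (pairExtend_mem hsr p).1 _ (pairExtend_mem hsr p).2
      _ (pairExtend_mem hsr q).1 _ (pairExtend_mem hsr q).2).trans
      (mul_le_mul_of_nonneg_right (Real.le_coe_toNNReal ε) (pairNorm_nonneg _ _ _ _ _ _))
  set z := hT.fixedPoint T
  have hz : T z = z := hT.fixedPoint_isFixedPt
  refine ⟨(pairExtend hsr z).1, (pairExtend hsr z).2, (pairExtend_mem hsr z).1,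
    (pairExtend_mem hsr z).2, fun η hη => ?_, fun η hη => ?_⟩
  · exact (congrArg (fun p => p.1 ⟨η, hη⟩) hz).trans (IccExtend_of_mem hsr _ hη).symm
  · exact (congrArg (fun p => p.2.1 ⟨η, hη⟩) hz).trans (IciExtend_of_mem _ hη).symm

theorem eqOn_of_isFixedPt_of_contraction (hε : ε < 1) (hcon : IsContractionOn s0 r0 ε Ψ1 Ψ2)
    {f1 f2 g1 g2 : ℝ → ℝ} (hf1 : f1 ∈ C1 s0 r0) (hf2 : f2 ∈ Mset r0) (hg1 : g1 ∈ C1 s0 r0)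
    (hg2 : g2 ∈ Mset r0) (hf1_fix : EqOn (Ψ1 f1 f2) f1 (Icc s0 r0))
    (hf2_fix : EqOn (Ψ2 f1 f2) f2 (Ici r0)) (hg1_fix : EqOn (Ψ1 g1 g2) g1 (Icc s0 r0))
    (hg2_fix : EqOn (Ψ2 g1 g2) g2 (Ici r0)) :
    EqOn g1 f1 (Icc s0 r0) ∧ EqOn g2 f2 (Ici r0) := by
  have hd : pairNorm s0 r0 g1 g2 f1 f2 ≤ ε * pairNorm s0 r0 g1 g2 f1 f2 := by
    have h1 : supOn (Icc s0 r0) (fun η => Ψ1 g1 g2 η - Ψ1 f1 f2 η)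
        = supOn (Icc s0 r0) (g1 - f1) :=
      supOn_congr fun η hη => by rw [hg1_fix hη, hf1_fix hη]; rfl
    have h2 : supOn (Ici r0) (fun η => Ψ2 g1 g2 η - Ψ2 f1 f2 η)
        = supOn (Ici r0) (g2 - f2) :=
      supOn_congr fun η hη => by rw [hg2_fix hη, hf2_fix hη]; rfl
    have h := hcon g1 hg1 g2 hg2 f1 hf1 f2 hf2
    rwa [h1, h2] at h
  have hd0 : pairNorm s0 r0 g1 g2 f1 f2 ≤ 0 := by
    nlinarith [pairNorm_nonneg s0 r0 g1 g2 f1 f2]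
  refine ⟨fun η hη => ?_, fun η hη => ?_⟩
  · have h := (abs_le_supOn (exists_abs_le_of_mem_C1 (hg1.sub hf1)) hη).trans
      ((le_max_left _ _).trans hd0)
    exact sub_eq_zero.1 (abs_nonpos_iff.1 h)
  · have h := (abs_le_supOn (exists_abs_sub_le_of_mem_Mset hg2 hf2) hη).trans
      ((le_max_right _ _).trans hd0)
    exact sub_eq_zero.1 (abs_nonpos_iff.1 h)

end FixedPoint

theorem stmt19 (c : Cst) (s0 r0 : ℝ) (L1 N1 K1 L2 N2 K2 : (ℝ → ℝ) → ℝ → ℝ)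
    (hpos : PosC c s0 r0) (hA : Assum c s0 r0 L1 N1 K1 L2 N2 K2) :
    (∀ f1 ∈ C1 s0 r0, ∀ f2 ∈ Mset r0,
      (fun η => V1f c s0 r0 L1 N1 K1 L2 N2 K2 f1 f2 η) ∈ C1 s0 r0 ∧
      (fun η => V2f c s0 r0 L1 N1 K1 L2 N2 K2 f1 f2 η) ∈ Mset r0) ∧
    ((∃ ε : ℝ, ε < 1 ∧ ∀ f1 ∈ C1 s0 r0, ∀ f2 ∈ Mset r0, ∀ g1 ∈ C1 s0 r0, ∀ g2 ∈ Mset r0,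
        max (supOn (Set.Icc s0 r0) (fun η => V1f c s0 r0 L1 N1 K1 L2 N2 K2 f1 f2 η - V1f c s0 r0 L1 N1 K1 L2 N2 K2 g1 g2 η))
            (supOn (Set.Ici r0) (fun η => V2f c s0 r0 L1 N1 K1 L2 N2 K2 f1 f2 η - V2f c s0 r0 L1 N1 K1 L2 N2 K2 g1 g2 η))
          ≤ ε * pairNorm s0 r0 f1 f2 g1 g2) →
      ∃ f1s f2s : ℝ → ℝ, f1s ∈ C1 s0 r0 ∧ f2s ∈ Mset r0 ∧
        (∀ η ∈ Set.Icc s0 r0, V1f c s0 r0 L1 N1 K1 L2 N2 K2 f1s f2s η = f1s η) ∧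
        (∀ η ∈ Set.Ici r0, V2f c s0 r0 L1 N1 K1 L2 N2 K2 f1s f2s η = f2s η) ∧
        ∀ g1 g2 : ℝ → ℝ, g1 ∈ C1 s0 r0 → g2 ∈ Mset r0 →
          (∀ η ∈ Set.Icc s0 r0, V1f c s0 r0 L1 N1 K1 L2 N2 K2 g1 g2 η = g1 η) →
          (∀ η ∈ Set.Ici r0, V2f c s0 r0 L1 N1 K1 L2 N2 K2 g1 g2 η = g2 η) →
          (∀ η ∈ Set.Icc s0 r0, g1 η = f1s η) ∧ (∀ η ∈ Set.Ici r0, g2 η = f2s η)) := by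
  have ⟨_, _, _, _, _, hsr, _⟩ := hpos
  have hmaps : ∀ f1 ∈ C1 s0 r0, ∀ f2 ∈ Mset r0,
      V1f c s0 r0 L1 N1 K1 L2 N2 K2 f1 f2 ∈ C1 s0 r0 ∧
      V2f c s0 r0 L1 N1 K1 L2 N2 K2 f1 f2 ∈ Mset r0 := fun f1 hf1 f2 hf2 =>
    ⟨V1f_mem_C1 hpos hA hf1, V2f_mem_Mset hpos hA hf1 hf2⟩
  refine ⟨hmaps, fun ⟨ε, hε, hcon⟩ => ?_⟩
  obtain ⟨f1, f2, hf1, hf2, hf1_fix, hf2_fix⟩ :=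
    exists_fixedPoint_of_contraction _ _ hsr.le hmaps hε hcon
  exact ⟨f1, f2, hf1, hf2, hf1_fix, hf2_fix, fun g1 g2 hg1 hg2 hg1_fix hg2_fix =>
    eqOn_of_isFixedPt_of_contraction _ _ hε hcon hf1 hf2 hg1 hg2 hf1_fix hf2_fix hg1_fix hg2_fix⟩
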